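/- arXiv:2506.01107 — 2 statements merged into one kernel-verified Lean document; each statement's English description precedes it below -/
import Mathlib

section
/- Drift over a phase of AM. Consider the MMAHH with acceptance operators OI and AM on f = OneMax, with p, q ∈ (0,1), started from an arbitrary x_0 ∈ L_i with i ∈ [0..n] and s_0 = AM. Then E[y_0 − y_{T_s^{(1)}}] = (2i − n)/(2 + q(n − 2)). -/
open MeasureTheory
open scoped ENNReal NNReal

namespace MMAHHStmt

/-- The two acceptance operators. -/
inductive Op : Type
  | OI : Op
  | AM : Op
  deriving DecidableEq

instance : MeasurableSpace Op := ⊤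

/-- Search points: bit-strings of length `n`. -/
abbrev Point (n : ℕ) := Fin n → Bool

/-- The number of one-bits of a bit-string. -/
def ones {n : ℕ} (x : Point n) : ℕ := (Finset.univ.filter fun i => x i = true).card

/-- The all-ones string, the global optimum of all benchmarks considered. -/
def optimum (n : ℕ) : Point n := fun _ => true

/-- Flipping the bit in position `v`. -/
def flipBit {n : ℕ} (x : Point n) (v : Fin n) : Point n := Function.update x v (!(x v))

open Classical in
/-- The search point obtained from `x` by proposing to flip bit `v` and applying the
acceptance operator `op` for the objective function `f`. -/
noncomputable def movedPoint {n : ℕ} (f : Point n → ℝ) (op : Op) (x : Point n) (v : Fin n) :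
    Point n :=
  match op with
  | Op.OI => if f x < f (flipBit x v) then flipBit x v else x
  | Op.AM => flipBit x v

open Classical in
/-- One-step transition probability of the search point under acceptance operator `op`:
a uniformly random bit is flipped and the move is accepted or rejected according to `op`. -/
noncomputable def moveProb {n : ℕ} (f : Point n → ℝ) (op : Op) (x x' : Point n) : ℝ≥0∞ :=
  ((Finset.univ.filter fun v => movedPoint f op x v = x').card : ℝ≥0∞) / n

/-- Transition probabilities of the two-state Markov chain on the acceptance operators. -/
noncomputable def switchProb (p q : ℝ) : Op → Op → ℝ≥0∞
  | Op.OI, Op.OI => ENNReal.ofReal (1 - p)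
  | Op.OI, Op.AM => ENNReal.ofReal p
  | Op.AM, Op.OI => ENNReal.ofReal q
  | Op.AM, Op.AM => ENNReal.ofReal (1 - q)

/-- One-step transition probabilities of the MMAHH on the state space
`Point n × Op`: the search point moves according to the current acceptance operator, and,
independently, the operator switches according to the two-state Markov chain. -/
noncomputable def mmahhTrans {n : ℕ} (f : Point n → ℝ) (p q : ℝ) :
    Point n × Op → Point n × Op → ℝ≥0∞ :=
  fun s s' => moveProb f s.2 s.1 s'.1 * switchProb p q s.2 s'.2

/-- `X` is (a version of) the MMAHH Markov chain with objective function `f` and switching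
probabilities `p` and `q`, under the measure `μ`: each `X t` is measurable, and conditionally
on any history, the next state is distributed according to `mmahhTrans`. -/
def IsMMAHH {n : ℕ} {Ω : Type*} [MeasurableSpace Ω] (μ : Measure Ω)
    (X : ℕ → Ω → Point n × Op) (f : Point n → ℝ) (p q : ℝ) : Prop :=
  (∀ t, Measurable (X t)) ∧
  ∀ (t : ℕ) (σ : ℕ → Point n × Op) (s' : Point n × Op),
    μ {ω | (∀ i ≤ t, X i ω = σ i) ∧ X (t + 1) ω = s'}
      = μ {ω | ∀ i ≤ t, X i ω = σ i} * mmahhTrans f p q (σ t) s'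

/-- The runtime: the first hitting time of the global optimum, as an extended natural number
(`⊤` if the optimum is never reached). -/
noncomputable def hitTime {n : ℕ} {Ω : Type*} (X : ℕ → Ω → Point n × Op) (ω : Ω) : ℕ∞ :=
  ⨅ t ∈ {t : ℕ | (X t ω).1 = optimum n}, (t : ℕ∞)

/-- The `k`-th switching time between the two acceptance operators (with junk value given by
`Nat.sInf ∅ = 0` on the probability-zero event that no further switch occurs). -/
noncomputable def switchTime {n : ℕ} {Ω : Type*} (X : ℕ → Ω → Point n × Op) : ℕ → Ω → ℕ
  | 0, _ => 0
  | k + 1, ω =>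
      sInf {t : ℕ | switchTime X k ω ≤ t ∧ (X t ω).2 ≠ (X (switchTime X k ω) ω).2}

/-- The OneMax benchmark. -/
noncomputable def OneMax (n : ℕ) (x : Point n) : ℝ := (ones x : ℝ)

/-!
Under AM every step flips a uniformly random bit, and independently of the search point the
phase ends after each step with probability `q`. Hence the phase has length `t + 1` with
probability `q (1 - q) ^ t`, and its end point is then `t + 1` uniform flips away from `x0`.
The centred count `ones x - n / 2` is an eigenfunction of the one-flip averaging operator with
eigenvalue `(n - 2) / n`, so it shrinks geometrically along the phase; summing the resulting two
geometric series gives the drift.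
-/

instance : Fintype Op := ⟨⟨{Op.OI, Op.AM}, by decide⟩, fun x => by cases x <;> decide⟩

section FlipBit

variable {n : ℕ}

theorem ones_le (x : Point n) : ones x ≤ n :=
  (Finset.card_filter_le _ _).trans_eq (Finset.card_fin n)

theorem ones_flipBit (x : Point n) (v : Fin n) :
    (ones (flipBit x v) : ℝ) = ones x + 1 - 2 * if x v = true then 1 else 0 := by
  classical
  cases hv : x v
  · have hset : (Finset.univ.filter fun i => flipBit x v i = true) =
        insert v (Finset.univ.filter fun i => x i = true) := by
      ext j
      by_cases hj : j = v <;> simp [flipBit, Function.update, hj, hv]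
    simp [ones, hset, Finset.card_insert_of_notMem, hv]
  · have hmem : v ∈ Finset.univ.filter fun i => x i = true := by simp [hv]
    have hset : (Finset.univ.filter fun i => flipBit x v i = true) =
        (Finset.univ.filter fun i => x i = true).erase v := by
      ext j
      by_cases hj : j = v <;> simp [flipBit, Function.update, hj, hv]
    simp only [ones, hset, ← Finset.card_erase_add_one hmem, if_true]
    push_cast
    ring

theorem sum_ones_flipBit (x : Point n) :
    ∑ v, (ones (flipBit x v) : ℝ) = (n - 2) * ones x + n := by
  classical
  simp only [ones_flipBit, Finset.sum_sub_distrib, ← Finset.mul_sum, Finset.sum_boole,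
    Finset.sum_const, Finset.card_univ, Fintype.card_fin, nsmul_eq_mul]
  unfold ones
  ring

theorem sum_ones_flipBit_sub_half (x : Point n) :
    ∑ v, ((ones (flipBit x v) : ℝ) - n / 2) = (n - 2) * (ones x - n / 2) := by
  rw [Finset.sum_sub_distrib, sum_ones_flipBit]
  simp only [Finset.sum_const, Finset.card_univ, Fintype.card_fin, nsmul_eq_mul]
  ring

theorem sum_card_filter_flipBit_mul [DecidableEq (Point n)] (x : Point n) (g : Point n → ℝ) :
    ∑ x', ((Finset.univ.filter fun v => flipBit x v = x').card : ℝ) * g x' =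
      ∑ v, g (flipBit x v) := by
  rw [← Finset.sum_fiberwise Finset.univ (fun v => flipBit x v)]
  refine Finset.sum_congr rfl fun x' _ => ?_
  rw [Finset.sum_congr rfl fun v hv => by rw [(Finset.mem_filter.1 hv).2], Finset.sum_const,
    nsmul_eq_mul]

end FlipBit

section Markov

variable {α Ω : Type*} [MeasurableSpace α] [MeasurableSingletonClass α] [Countable α]
  [MeasurableSpace Ω] {μ : Measure Ω} {X : ℕ → Ω → α}

theorem measure_history_mem_inter_succ {P : α → α → ℝ≥0∞} (hX : ∀ t, Measurable (X t))
    (hP : ∀ (t : ℕ) (σ : ℕ → α) (s' : α),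
      μ {ω | (∀ i ≤ t, X i ω = σ i) ∧ X (t + 1) ω = s'} = μ {ω | ∀ i ≤ t, X i ω = σ i} * P (σ t) s')
    {t : ℕ} {S : Set (Fin (t + 1) → α)} {s : α} (hS : ∀ τ ∈ S, τ (Fin.last t) = s) (s' : α) :
    μ ({ω | (fun j : Fin (t + 1) => X j ω) ∈ S} ∩ {ω | X (t + 1) ω = s'}) =
      μ {ω | (fun j : Fin (t + 1) => X j ω) ∈ S} * P s s' := by
  set history : Ω → Fin (t + 1) → α := fun ω j => X j ω
  have hhistory : Measurable history := measurable_pi_lambda _ fun j => hX j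
  have hcyl : ∀ τ ∈ S, μ (history ⁻¹' {τ} ∩ {ω | X (t + 1) ω = s'}) =
      μ (history ⁻¹' {τ}) * P s s' := by
    intro τ hτ
    have hpath : {ω | ∀ i ≤ t, X i ω = τ ⟨min i t, by omega⟩} = history ⁻¹' {τ} := by
      ext ω
      simp only [Set.mem_preimage, Set.mem_singleton_iff, funext_iff, Fin.forall_iff, history,
        Nat.lt_succ_iff]
      exact forall₂_congr fun i hi => by simp only [min_eq_left hi]
    have h := hP t (fun i => τ ⟨min i t, by omega⟩) s'
    rw [Set.ofPred_and, hpath] at h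
    rw [← hS τ hτ, h]
    simp only [min_self, Fin.last]
  calc μ (history ⁻¹' S ∩ {ω | X (t + 1) ω = s'})
      = μ.restrict {ω | X (t + 1) ω = s'} (history ⁻¹' S) :=
        (Measure.restrict_apply (hhistory (Set.to_countable S).measurableSet)).symm
    _ = ∑' τ : S, μ.restrict {ω | X (t + 1) ω = s'} (history ⁻¹' {↑τ}) :=
        (tsum_measure_preimage_singleton (Set.to_countable S)
          fun τ _ => hhistory (measurableSet_singleton τ)).symm
    _ = ∑' τ : S, μ (history ⁻¹' {↑τ}) * P s s' := by
        refine tsum_congr fun τ => ?_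
        rw [Measure.restrict_apply (hhistory (measurableSet_singleton _)), hcyl τ τ.2]
    _ = μ (history ⁻¹' S) * P s s' := by
        rw [ENNReal.tsum_mul_right, tsum_measure_preimage_singleton (Set.to_countable S)
          fun τ _ => hhistory (measurableSet_singleton τ)]

end Markov

section Measurability

variable {Ω β : Type*} [MeasurableSpace Ω] [MeasurableSpace β]

theorem Nat.sInf_eq_iff (S : Set ℕ) (t : ℕ) :
    sInf S = t ↔ IsLeast S t ∨ (S = ∅ ∧ t = 0) := by
  rcases S.eq_empty_or_nonempty with rfl | hS
  · simpa [eq_comm] using fun h : IsLeast ∅ t => h.1.elim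
  · refine ⟨fun h => Or.inl (h ▸ ⟨Nat.sInf_mem hS, fun _ => Nat.sInf_le⟩), ?_⟩
    rintro (h | ⟨rfl, -⟩)
    · exact h.csInf_eq
    · exact absurd rfl hS.ne_empty

theorem measurable_sInf_setOf {P : ℕ → Ω → Prop} (hP : ∀ t, Measurable (P t)) :
    Measurable fun ω => sInf {t | P t ω} := by
  refine measurable_to_countable' fun t => ?_
  have : (fun ω => sInf {t | P t ω}) ⁻¹' {t} =
      {ω | (P t ω ∧ ∀ j, P j ω → t ≤ j) ∨ ((∀ j, ¬P j ω) ∧ t = 0)} := by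
    ext ω
    simp [Nat.sInf_eq_iff, IsLeast, lowerBounds, Set.eq_empty_iff_forall_notMem]
  rw [this]
  exact measurableSet_setOfPred.2 <| ((hP t).and <| .forall fun j => (hP j).imp measurable_const).or
    ((Measurable.forall fun j => (hP j).not).and measurable_const)

theorem measurable_apply_random_index {Y : ℕ → Ω → β} (hY : ∀ t, Measurable (Y t))
    {T : Ω → ℕ} (hT : Measurable T) : Measurable fun ω => Y (T ω) ω :=
  (measurable_from_prod_countable_left (f := fun p : Ω × ℕ => Y p.2 p.1) hY).comp
    (measurable_id.prodMk hT)

end Measurability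

open Function in
theorem hasSum_integral_of_ae_mem_iUnion {Ω ι : Type*} [MeasurableSpace Ω] [Countable ι]
    {μ : Measure Ω} {A : ι → Set Ω} (hA : ∀ k, MeasurableSet (A k))
    (hdisj : Pairwise (Disjoint on A)) (hcover : ∀ᵐ ω ∂μ, ω ∈ ⋃ k, A k) {F : Ω → ℝ}
    (hF : Integrable F μ) {c : ι → ℝ} (hc : ∀ k, ∀ ω ∈ A k, F ω = c k) :
    HasSum (fun k => μ.real (A k) * c k) (∫ ω, F ω ∂μ) := by
  have h := hasSum_integral_iUnion hA hdisj hF.integrableOn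
  rw [Measure.restrict_eq_self_of_ae_mem hcover] at h
  refine h.congr_fun fun k => ?_
  rw [setIntegral_congr_fun (hA k) (hc k), setIntegral_const, smul_eq_mul]

section AMPhase

variable {n : ℕ} {Ω : Type*} {X : ℕ → Ω → Point n × Op} {x0 : Point n}

variable (X x0) in
def amPhase (t : ℕ) (s : Point n × Op) : Set Ω :=
  {ω | X 0 ω = (x0, Op.AM) ∧ (∀ j < t, (X j ω).2 = Op.AM) ∧ X t ω = s}

theorem amPhase_eq_history_preimage (t : ℕ) (s : Point n × Op) :
    amPhase X x0 t s = {ω | (fun j : Fin (t + 1) => X j ω) ∈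
      {τ | τ 0 = (x0, Op.AM) ∧ (∀ j : Fin (t + 1), (j : ℕ) < t → (τ j).2 = Op.AM) ∧
        τ (Fin.last t) = s}} := by
  ext ω
  simp only [amPhase, Set.mem_ofPred_eq, Fin.forall_iff, Fin.val_zero, Fin.val_last]
  exact and_congr_right' (and_congr_left' ⟨fun h i _ hi => h i hi, fun h j hj => h j (by omega) hj⟩)

theorem amPhase_succ (t : ℕ) (s : Point n × Op) :
    amPhase X x0 (t + 1) s = ⋃ x, amPhase X x0 t (x, Op.AM) ∩ {ω | X (t + 1) ω = s} := by
  ext ω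
  simp only [amPhase, Set.mem_iUnion, Set.mem_inter_iff, Set.mem_ofPred_eq]
  constructor
  · rintro ⟨h0, hAM, hs⟩
    exact ⟨(X t ω).1, ⟨h0, fun j hj => hAM j (by omega), Prod.ext rfl (hAM t (by omega))⟩, hs⟩
  · rintro ⟨x, ⟨h0, hAM, ht⟩, hs⟩
    refine ⟨h0, fun j hj => ?_, hs⟩
    rcases Nat.lt_succ_iff_lt_or_eq.1 hj with hj | rfl
    · exact hAM j hj
    · rw [ht]

variable [MeasurableSpace Ω] {μ : Measure Ω} {f : Point n → ℝ} {p q : ℝ}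

theorem measurableSet_amPhase (hX : ∀ t, Measurable (X t)) (t : ℕ) (s : Point n × Op) :
    MeasurableSet (amPhase X x0 t s) := by
  rw [amPhase_eq_history_preimage]
  exact measurableSet_preimage (measurable_pi_lambda _ fun j => hX j) .of_discrete

theorem measure_amPhase_succ (hchain : IsMMAHH μ X f p q) (t : ℕ) (s : Point n × Op) :
    μ (amPhase X x0 (t + 1) s) =
      ∑ x, μ (amPhase X x0 t (x, Op.AM)) * mmahhTrans f p q (x, Op.AM) s := by
  rw [amPhase_succ, measure_iUnion, tsum_fintype]
  · refine Finset.sum_congr rfl fun x _ => ?_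
    rw [amPhase_eq_history_preimage]
    exact measure_history_mem_inter_succ hchain.1 hchain.2 (fun τ hτ => hτ.2.2) s
  · intro x y hxy
    refine Disjoint.mono Set.inter_subset_left Set.inter_subset_left ?_
    refine Set.disjoint_left.2 fun ω hx hy => hxy ?_
    simpa using hx.2.2.symm.trans hy.2.2
  · exact fun x => (measurableSet_amPhase hchain.1 t _).inter
      (hchain.1 (t + 1) (measurableSet_singleton s))

theorem measure_amPhase_zero (hinit : μ {ω | X 0 ω = (x0, Op.AM)} = 1) (x : Point n) :
    μ (amPhase X x0 0 (x, Op.AM)) = if x = x0 then 1 else 0 := by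
  split_ifs with hx
  · subst hx
    simpa [amPhase] using hinit
  · convert measure_empty (μ := μ)
    refine Set.eq_empty_of_forall_notMem fun ω ⟨h0, _, hx'⟩ => hx ?_
    simpa using hx'.symm.trans h0


open Classical in
theorem mmahhTrans_AM (x : Point n) (s : Point n × Op) :
    mmahhTrans f p q (x, Op.AM) s =
      ((Finset.univ.filter fun v => flipBit x v = s.1).card : ℝ≥0∞) / n *
        switchProb p q Op.AM s.2 :=
  rfl

theorem mmahhTrans_AM_ne_top (hn : n ≠ 0) (x : Point n) (s : Point n × Op) :
    mmahhTrans f p q (x, Op.AM) s ≠ ⊤ := by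
  rw [mmahhTrans_AM]
  refine ENNReal.mul_ne_top (ENNReal.div_ne_top (ENNReal.natCast_ne_top _) (by simpa)) ?_
  cases s.2 <;> simp [switchProb]

/-- Under AM every step flips a uniformly random bit, whatever the operator switches to. -/
theorem sum_measureReal_amPhase_succ_mul [IsFiniteMeasure μ] (hchain : IsMMAHH μ X f p q)
    (hn : n ≠ 0) (t : ℕ) (o : Op) (g : Point n → ℝ) :
    ∑ x', μ.real (amPhase X x0 (t + 1) (x', o)) * g x' =
      (switchProb p q Op.AM o).toReal / n *
        ∑ x, μ.real (amPhase X x0 t (x, Op.AM)) * ∑ v, g (flipBit x v) := by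
  classical
  have hstep : ∀ x', μ.real (amPhase X x0 (t + 1) (x', o)) =
      ∑ x, μ.real (amPhase X x0 t (x, Op.AM)) *
        (((Finset.univ.filter fun v => flipBit x v = x').card : ℝ) / n *
          (switchProb p q Op.AM o).toReal) := by
    intro x'
    rw [measureReal_def, measure_amPhase_succ hchain, ENNReal.toReal_sum fun x _ =>
      ENNReal.mul_ne_top (measure_ne_top μ _) (mmahhTrans_AM_ne_top hn x _)]
    refine Finset.sum_congr rfl fun x _ => ?_
    rw [ENNReal.toReal_mul, mmahhTrans_AM, ENNReal.toReal_mul, ENNReal.toReal_div,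
      measureReal_def]
    simp
  simp only [hstep, Finset.sum_mul]
  rw [Finset.sum_comm, Finset.mul_sum]
  refine Finset.sum_congr rfl fun x _ => ?_
  rw [← sum_card_filter_flipBit_mul x g, Finset.mul_sum, Finset.mul_sum]
  exact Finset.sum_congr rfl fun x' _ => by ring

theorem sum_measureReal_amPhase_mul_of_eigen [IsFiniteMeasure μ]
    (hchain : IsMMAHH μ X f p q) (hinit : μ {ω | X 0 ω = (x0, Op.AM)} = 1) (hn : n ≠ 0)
    (hq1 : q ≤ 1) {g : Point n → ℝ} {c : ℝ} (hg : ∀ x, ∑ v, g (flipBit x v) = c * g x) (t : ℕ) :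
    ∑ x, μ.real (amPhase X x0 t (x, Op.AM)) * g x = ((1 - q) * c / n) ^ t * g x0 := by
  induction t with
  | zero => simp [measureReal_def, measure_amPhase_zero hinit, apply_ite ENNReal.toReal]
  | succ t ih =>
    simp only [sum_measureReal_amPhase_succ_mul hchain hn, hg, switchProb,
      ENNReal.toReal_ofReal (sub_nonneg.2 hq1)]
    simp only [mul_left_comm _ c, ← Finset.mul_sum, ih]
    ring

theorem sum_measureReal_amPhase_OI_mul_of_eigen [IsFiniteMeasure μ]
    (hchain : IsMMAHH μ X f p q) (hinit : μ {ω | X 0 ω = (x0, Op.AM)} = 1) (hn : n ≠ 0)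
    (hq0 : 0 ≤ q) (hq1 : q ≤ 1) {g : Point n → ℝ} {c : ℝ}
    (hg : ∀ x, ∑ v, g (flipBit x v) = c * g x) (t : ℕ) :
    ∑ x, μ.real (amPhase X x0 (t + 1) (x, Op.OI)) * g x =
      q * c / n * (((1 - q) * c / n) ^ t * g x0) := by
  simp only [sum_measureReal_amPhase_succ_mul hchain hn, hg, mul_left_comm _ c, ← Finset.mul_sum,
    sum_measureReal_amPhase_mul_of_eigen hchain hinit hn hq1 hg, switchProb,
    ENNReal.toReal_ofReal hq0]
  ring

end AMPhase

section Switching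

variable {n : ℕ} {Ω : Type*} {X : ℕ → Ω → Point n × Op} {x0 : Point n}

theorem switchTime_one_eq_of_mem_amPhase {t : ℕ} {x : Point n} {ω : Ω}
    (hω : ω ∈ amPhase X x0 (t + 1) (x, Op.OI)) : switchTime X 1 ω = t + 1 := by
  obtain ⟨h0, hAM, ht⟩ := hω
  refine IsLeast.csInf_eq ⟨⟨Nat.zero_le _, by simp [switchTime, h0, ht]⟩, ?_⟩
  rintro j ⟨-, hj⟩
  by_contra! hlt
  exact hj (by simp [switchTime, h0, hAM j hlt])

open Function in
theorem pairwise_disjoint_amPhase_OI :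
    Pairwise (Disjoint on fun k : ℕ × Point n => amPhase X x0 (k.1 + 1) (k.2, Op.OI)) := by
  rintro ⟨t, x⟩ ⟨t', x'⟩ hne
  refine Set.disjoint_left.2 fun ω hω hω' => hne ?_
  have htt' : t = t' := by
    simpa using (switchTime_one_eq_of_mem_amPhase hω).symm.trans
      (switchTime_one_eq_of_mem_amPhase hω')
  subst htt'
  simpa using hω.2.2.symm.trans hω'.2.2

variable [MeasurableSpace Ω] {μ : Measure Ω} {f : Point n → ℝ} {p q : ℝ}

theorem measurable_switchTime_one (hX : ∀ t, Measurable (X t)) :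
    Measurable (switchTime X 1) := by
  change Measurable fun ω => sInf {t | 0 ≤ t ∧ (X t ω).2 ≠ (X 0 ω).2}
  exact measurable_sInf_setOf fun t => measurable_const.and
    ((measurable_snd.comp (hX t)).eq (measurable_snd.comp (hX 0))).not

theorem measure_forall_snd_eq_AM_eq_zero [IsFiniteMeasure μ] (hchain : IsMMAHH μ X f p q)
    (hinit : μ {ω | X 0 ω = (x0, Op.AM)} = 1) (hn : n ≠ 0) (hq0 : 0 < q) (hq1 : q ≤ 1) :
    μ {ω | X 0 ω = (x0, Op.AM) ∧ ∀ t, (X t ω).2 = Op.AM} = 0 := by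
  set N := {ω | X 0 ω = (x0, Op.AM) ∧ ∀ t, (X t ω).2 = Op.AM}
  have hbound : ∀ t, μ.real N ≤ (1 - q) ^ t := fun t => calc
    μ.real N ≤ μ.real (⋃ x, amPhase X x0 t (x, Op.AM)) :=
      measureReal_mono fun ω ⟨h0, hAM⟩ =>
        Set.mem_iUnion.2 ⟨(X t ω).1, h0, fun j _ => hAM j, Prod.ext rfl (hAM t)⟩
    _ ≤ ∑ x, μ.real (amPhase X x0 t (x, Op.AM)) := measureReal_iUnion_fintype_le _
    _ = (1 - q) ^ t := by
      simpa [mul_div_assoc, div_self (Nat.cast_ne_zero.2 hn : (n : ℝ) ≠ 0)] using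
        sum_measureReal_amPhase_mul_of_eigen hchain hinit hn hq1 (g := fun _ => 1) (c := n)
          (by simp) t
  have hlim := tendsto_pow_atTop_nhds_zero_of_lt_one (sub_nonneg.2 hq1) (sub_lt_self 1 hq0)
  exact (measureReal_eq_zero_iff (measure_ne_top μ N)).1
    (le_antisymm (ge_of_tendsto' hlim hbound) measureReal_nonneg)

theorem ae_mem_iUnion_amPhase_OI [IsProbabilityMeasure μ] (hchain : IsMMAHH μ X f p q)
    (hinit : μ {ω | X 0 ω = (x0, Op.AM)} = 1) (hn : n ≠ 0) (hq0 : 0 < q) (hq1 : q ≤ 1) :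
    ∀ᵐ ω ∂μ, ω ∈ ⋃ k : ℕ × Point n, amPhase X x0 (k.1 + 1) (k.2, Op.OI) := by
  have hstart : ∀ᵐ ω ∂μ, X 0 ω = (x0, Op.AM) :=
    (ae_iff_measure_eq (hchain.1 0 (measurableSet_singleton _)).nullMeasurableSet).2
      (by rw [measure_univ]; exact hinit)
  have hswitch := measure_eq_zero_iff_ae_notMem.1
    (measure_forall_snd_eq_AM_eq_zero hchain hinit hn hq0 hq1)
  filter_upwards [hstart, hswitch] with ω h0 hsw
  have hex : ∃ t, (X t ω).2 ≠ Op.AM := by simpa [h0] using hsw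
  obtain ⟨m, hm⟩ : ∃ m, Nat.find hex = m + 1 :=
    Nat.exists_eq_succ_of_ne_zero fun h => Nat.find_spec hex (by simp [h, h0])
  have hOI : (X (m + 1) ω).2 = Op.OI := by
    have hne : (X (m + 1) ω).2 ≠ Op.AM := hm ▸ Nat.find_spec hex
    cases h : (X (m + 1) ω).2
    · rfl
    · exact absurd h hne
  refine Set.mem_iUnion.2 ⟨(m, (X (m + 1) ω).1), h0, fun j hj => ?_, Prod.ext rfl hOI⟩
  simpa using Nat.find_min hex (hm ▸ hj)

theorem hasSum_integral_switchTime_one [IsProbabilityMeasure μ] (hchain : IsMMAHH μ X f p q)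
    (hinit : μ {ω | X 0 ω = (x0, Op.AM)} = 1) (hn : n ≠ 0) (hq0 : 0 < q) (hq1 : q ≤ 1)
    (G : Point n → Point n → ℝ) :
    HasSum (fun t => ∑ x, μ.real (amPhase X x0 (t + 1) (x, Op.OI)) * G x0 x)
      (∫ ω, G (X 0 ω).1 (X (switchTime X 1 ω) ω).1 ∂μ) := by
  have hmeas : Measurable fun ω => (X 0 ω, X (switchTime X 1 ω) ω) :=
    (hchain.1 0).prodMk
      (measurable_apply_random_index hchain.1 (measurable_switchTime_one hchain.1))
  have hint : Integrable (fun ω => G (X 0 ω).1 (X (switchTime X 1 ω) ω).1) μ :=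
    (Integrable.of_finite (f := fun s : (Point n × Op) × (Point n × Op) => G s.1.1 s.2.1)
      ).comp_measurable hmeas
  refine (hasSum_integral_of_ae_mem_iUnion (fun k => measurableSet_amPhase hchain.1 _ _)
    pairwise_disjoint_amPhase_OI (ae_mem_iUnion_amPhase_OI hchain hinit hn hq0 hq1) hint
    (c := fun k => G x0 k.2) ?_).prod_fiberwise fun t => hasSum_fintype _
  rintro ⟨t, x⟩ ω hω
  rw [switchTime_one_eq_of_mem_amPhase hω, hω.1, hω.2.2]

end Switching

theorem hasSum_geometric_drift {n : ℕ} (hn : 2 ≤ n) {q : ℝ} (hq0 : 0 < q) (hq1 : q < 1) (c : ℝ) :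
    HasSum (fun t : ℕ => q * ((n - 2) / n * ((1 - q) * (n - 2) / n) ^ t - (1 - q) ^ t) * c)
      (-2 * c / (2 + q * (n - 2))) := by
  have hn' : (2 : ℝ) ≤ n := by exact_mod_cast hn
  have hr0 : 0 ≤ (1 - q) * (n - 2) / n := by
    apply div_nonneg (mul_nonneg _ _) <;> linarith
  have hr1 : (1 - q) * (n - 2) / n < 1 := by
    rw [div_lt_one (by linarith)]
    nlinarith
  have h := (((hasSum_geometric_of_lt_one hr0 hr1).mul_left ((n - 2) / n : ℝ)).sub
    (hasSum_geometric_of_lt_one (sub_nonneg.2 hq1.le) (sub_lt_self 1 hq0))).mul_left q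
  have hd : (0 : ℝ) < 2 + q * (n - 2) := by nlinarith
  have hsum : q * ((n - 2) / n * (1 - (1 - q) * (n - 2) / n)⁻¹ - (1 - (1 - q))⁻¹) * c =
      -2 * c / (2 + q * (n - 2)) := by
    rw [show 1 - (1 - q) * (n - 2) / n = (2 + q * (n - 2)) / n by field_simp; ring,
      sub_sub_cancel]
    field_simp
    ring
  exact hsum ▸ h.mul_right c

theorem drift_am_phase_general (n : ℕ) (hn : 2 ≤ n) (p q : ℝ)
    (hq0 : 0 < q) (hq1 : q < 1)
    (i : ℕ) (x0 : Point n) (hx0 : n - ones x0 = i)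
    (Ω : Type) [MeasurableSpace Ω] (μ : Measure Ω) (X : ℕ → Ω → Point n × Op)
    (hprob : IsProbabilityMeasure μ) (hchain : IsMMAHH μ X (OneMax n) p q)
    (hinit : μ {ω | X 0 ω = (x0, Op.AM)} = 1) :
    ∫ ω, (((n : ℝ) - (ones (X 0 ω).1 : ℝ)) -
        ((n : ℝ) - (ones (X (switchTime X 1 ω) ω).1 : ℝ))) ∂μ
      = (2 * (i : ℝ) - (n : ℝ)) / (2 + q * ((n : ℝ) - 2)) := by
  have hn0 : n ≠ 0 := by omega
  have hi : (i : ℝ) = n - ones x0 := by rw [← hx0, Nat.cast_sub (ones_le x0)]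
  refine (hasSum_integral_switchTime_one hchain hinit hn0 hq0 hq1.le
    fun y z => ((n : ℝ) - ones y) - (n - ones z)).unique ?_
  convert hasSum_geometric_drift hn hq0 hq1 ((ones x0 : ℝ) - n / 2) using 1
  · funext t
    have hcentered := sum_measureReal_amPhase_OI_mul_of_eigen hchain hinit hn0 hq0.le hq1.le
      (g := fun x => (ones x : ℝ) - n / 2) sum_ones_flipBit_sub_half t
    have hmass := sum_measureReal_amPhase_OI_mul_of_eigen hchain hinit hn0 hq0.le hq1.le
      (g := fun _ => 1) (c := n) (by simp) t
    calc ∑ x, μ.real (amPhase X x0 (t + 1) (x, Op.OI)) * (((n : ℝ) - ones x0) - (n - ones x))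
        = ∑ x, μ.real (amPhase X x0 (t + 1) (x, Op.OI)) * ((ones x : ℝ) - n / 2) -
            (∑ x, μ.real (amPhase X x0 (t + 1) (x, Op.OI)) * 1) * ((ones x0 : ℝ) - n / 2) := by
          rw [Finset.sum_mul, ← Finset.sum_sub_distrib]
          exact Finset.sum_congr rfl fun x _ => by ring
      _ = _ := by
          rw [hcentered, hmass]
          field_simp
  · rw [hi]
    field_simp
    ring

/-- Drift over a phase of AM on OneMax (Lemma 5 of the paper). -/
theorem drift_am_phase (n : ℕ) (hn : 2 ≤ n) (p q : ℝ)
    (hp0 : 0 < p) (hp1 : p < 1) (hq0 : 0 < q) (hq1 : q < 1)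
    (i : ℕ) (hi : i ≤ n) (x0 : Point n) (hx0 : n - ones x0 = i)
    (Ω : Type) [MeasurableSpace Ω] (μ : Measure Ω) (X : ℕ → Ω → Point n × Op)
    (hprob : IsProbabilityMeasure μ) (hchain : IsMMAHH μ X (OneMax n) p q)
    (hinit : μ {ω | X 0 ω = (x0, Op.AM)} = 1) :
    ∫ ω, (((n : ℝ) - (ones (X 0 ω).1 : ℝ)) -
        ((n : ℝ) - (ones (X (switchTime X 1 ω) ω).1 : ℝ))) ∂μ
      = (2 * (i : ℝ) - (n : ℝ)) / (2 + q * ((n : ℝ) - 2)) :=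
  drift_am_phase_general n hn p q hq0 hq1 i x0 hx0 Ω μ X hprob hchain hinit

end MMAHHStmt
end

section
/- Drift in the gap region of Jump_m. Let n ≥ 2 and let m be an integer with 1 < m < n/2, and define the potential d : {0,1}^n → ℝ by d(x*) = 0 and d(x) = |n − m − ‖x‖₁| for x ≠ x*. Consider the MMAHH with acceptance operators OI and AM on f = Jump_m, with p, q ∈ (0,1). Then for every t ≥ 0, every x ∈ {0,1}^n with n − m < ‖x‖₁ < n, and every s ∈ {OI, AM}: E[d(x_t) − d(x_{t+1}) | x_t = x, s_t = s] ≥ 2·d(x)/n. -/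
open MeasureTheory
open scoped ENNReal NNReal

namespace MMAHHStmt

/-- The Jump benchmark with gap parameter `m`. -/
noncomputable def Jump (n m : ℕ) (x : Point n) : ℝ :=
  if ones x ≤ n - m ∨ ones x = n then (m : ℝ) + (ones x : ℝ) else (n : ℝ) - (ones x : ℝ)

/-- The potential used in the gap region of `Jump_m`. -/
noncomputable def gapPotential (n m : ℕ) (x : Point n) : ℝ :=
  if x = optimum n then 0 else |(n : ℝ) - (m : ℝ) - (ones x : ℝ)|

/-!
Conditioned on `(x_t, s_t) = (x, s)`, the Markov property turns the expected drift into a sum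
over the transition kernel; since the operator switch is independent of the move and its
probabilities sum to one, this is the average over the `n` bit positions of the drift of the
move under `s`. With `k = ‖x‖₁` and `d(x) = k - (n - m)`, flipping any of the `k` one-bits
improves `Jump_m` (inside the gap, or onto its boundary `n - m` where `Jump_m = n`), so it is
accepted under both operators and `d` drops by one. Each of the `n - k` zero-bits either reaches
the optimum (`k = n - 1`, gain `d(x)`), or is rejected by OI (gain `0`), or is accepted by AM
(gain `-1`). In all three cases `k + (n - k) · gain ≥ 2 d(x)`, using `2 m ≤ n`.
-/

open ProbabilityTheory Finset

section MarkovChain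

variable {Ω S : Type*} {X : ℕ → Ω → S}

/-- The transition law of `IsMMAHH` given the whole history, for an arbitrary kernel `K`. -/
def IsMarkovChain [MeasurableSpace Ω] (μ : Measure Ω) (X : ℕ → Ω → S) (K : S → S → ℝ≥0∞) :
    Prop :=
  ∀ (t : ℕ) (σ : ℕ → S) (s' : S),
    μ {ω | (∀ i ≤ t, X i ω = σ i) ∧ X (t + 1) ω = s'} = μ {ω | ∀ i ≤ t, X i ω = σ i} * K (σ t) s'

def pathUpTo (X : ℕ → Ω → S) (t : ℕ) (ω : Ω) : Fin (t + 1) → S := fun i => X i ω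

lemma pathUpTo_preimage_singleton (t : ℕ) (g : Fin (t + 1) → S) (z : S) :
    pathUpTo X t ⁻¹' {g} =
      {ω | ∀ i ≤ t, X i ω = if h : i ≤ t then g ⟨i, Nat.lt_succ_of_le h⟩ else z} := by
  ext ω
  simp only [Set.mem_preimage, Set.mem_singleton_iff, funext_iff, pathUpTo]
  constructor
  · intro h i hi
    rw [dif_pos hi, ← h]
  · intro h i
    simpa [dif_pos (Nat.le_of_lt_succ i.2)] using h i (Nat.le_of_lt_succ i.2)

variable [MeasurableSpace Ω] [MeasurableSpace S] [MeasurableSingletonClass S]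
  {μ : Measure Ω} {K : S → S → ℝ≥0∞}

/-- The Markov property, obtained by summing over the finitely many paths up to time `t`. -/
lemma IsMarkovChain.measure_inter_succ_eq_mul [Finite S] (hX : ∀ t, Measurable (X t))
    (hK : IsMarkovChain μ X K) (t : ℕ) (z z' : S) :
    μ ({ω | X t ω = z} ∩ {ω | X (t + 1) ω = z'}) = μ {ω | X t ω = z} * K z z' := by
  classical
  have : Fintype S := Fintype.ofFinite S
  have hpath : Measurable (pathUpTo X t) := measurable_pi_lambda _ fun i => hX i
  have hfibers : ∀ g, MeasurableSet (pathUpTo X t ⁻¹' {g}) :=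
    fun g => hpath (measurableSet_singleton g)
  let G : Finset (Fin (t + 1) → S) := {g | g (Fin.last t) = z}
  have hG : {ω | X t ω = z} = pathUpTo X t ⁻¹' G := by ext; simp [G, pathUpTo]
  have hstep : ∀ g ∈ G, μ (pathUpTo X t ⁻¹' {g} ∩ {ω | X (t + 1) ω = z'}) =
      μ (pathUpTo X t ⁻¹' {g}) * K z z' := by
    intro g hg
    have hgz : g (Fin.last t) = z := by simpa [G] using hg
    rw [pathUpTo_preimage_singleton t g z]
    convert hK t _ z' using 2
    · rfl
    · rw [dif_pos le_rfl, ← hgz]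
      rfl
  calc μ ({ω | X t ω = z} ∩ {ω | X (t + 1) ω = z'})
      = μ.restrict {ω | X (t + 1) ω = z'} (pathUpTo X t ⁻¹' G) := by
        rw [Measure.restrict_apply (hpath G.measurableSet), hG]
    _ = ∑ g ∈ G, μ (pathUpTo X t ⁻¹' {g} ∩ {ω | X (t + 1) ω = z'}) := by
        rw [← sum_measure_preimage_singleton _ fun g _ => hfibers g]
        exact sum_congr rfl fun g _ => Measure.restrict_apply (hfibers g)
    _ = μ {ω | X t ω = z} * K z z' := by
        rw [sum_congr rfl hstep, ← sum_mul, hG,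
          sum_measure_preimage_singleton _ fun g _ => hfibers g]

lemma IsMarkovChain.cond_eq [Finite S] [IsFiniteMeasure μ] (hX : ∀ t, Measurable (X t))
    (hK : IsMarkovChain μ X K) {t : ℕ} {z : S} (hz : μ {ω | X t ω = z} ≠ 0) (z' : S) :
    μ[{ω | X (t + 1) ω = z'} | {ω | X t ω = z}] = K z z' := by
  have hstart : MeasurableSet {ω | X t ω = z} := hX t (measurableSet_singleton z)
  rw [cond_apply hstart, hK.measure_inter_succ_eq_mul hX, ← mul_assoc,
    ENNReal.inv_mul_cancel hz (measure_ne_top _ _), one_mul]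

lemma IsMarkovChain.integral_cond_eq_sum [Fintype S] [IsFiniteMeasure μ]
    (hX : ∀ t, Measurable (X t)) (hK : IsMarkovChain μ X K) {t : ℕ} {z : S}
    (hz : μ {ω | X t ω = z} ≠ 0) (g : S → S → ℝ) :
    ∫ ω, g (X t ω) (X (t + 1) ω) ∂μ[|{ω | X t ω = z}] = ∑ z', (K z z').toReal * g z z' := by
  have hstart : ∀ᵐ ω ∂μ[|{ω | X t ω = z}], X t ω = z :=
    ae_cond_mem (hX t (measurableSet_singleton z))
  rw [integral_congr_ae (hstart.mono fun ω h => by rw [h]),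
    ← integral_map (hX (t + 1)).aemeasurable (by fun_prop), integral_fintype (by fun_prop)]
  refine sum_congr rfl fun z' _ => ?_
  rw [measureReal_def, Measure.map_apply (hX (t + 1)) (measurableSet_singleton z')]
  exact congrArg (fun c => c.toReal * g z z') (hK.cond_eq hX hz z')

end MarkovChain

instance inst_s15 : Fintype Op := ⟨{.OI, .AM}, by rintro (_ | _) <;> simp⟩

instance : MeasurableSingletonClass Op := ⟨fun _ => trivial⟩

lemma sum_switchProb_toReal {p q : ℝ} (hp0 : 0 ≤ p) (hp1 : p ≤ 1) (hq0 : 0 ≤ q) (hq1 : q ≤ 1)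
    (s : Op) : ∑ s', (switchProb p q s s').toReal = 1 := by
  have huniv : (univ : Finset Op) = {.OI, .AM} := rfl
  cases s <;> simp [huniv, switchProb, hp0, hq0, hp1, hq1]

lemma sum_moveProb_toReal_mul {n : ℕ} (f : Point n → ℝ) (op : Op) (x : Point n)
    (g : Point n → ℝ) :
    ∑ x', (moveProb f op x x').toReal * g x' = (∑ v, g (movedPoint f op x v)) / n := by
  classical
  simp only [moveProb, ENNReal.toReal_div, ENNReal.toReal_natCast, div_mul_eq_mul_div,
    ← sum_div]
  rw [← sum_fiberwise univ (movedPoint f op x)]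
  refine congrArg (· / _) (sum_congr rfl fun x' _ => ?_)
  rw [sum_congr rfl fun v hv => by rw [(mem_filter.mp hv).2], sum_const, nsmul_eq_mul]

lemma sum_mmahhTrans_toReal_mul {n : ℕ} (f : Point n → ℝ) {p q : ℝ} (hp0 : 0 ≤ p) (hp1 : p ≤ 1)
    (hq0 : 0 ≤ q) (hq1 : q ≤ 1) (z : Point n × Op) (g : Point n → ℝ) :
    ∑ z', (mmahhTrans f p q z z').toReal * g z'.1 = (∑ v, g (movedPoint f z.2 z.1 v)) / n := by
  simp only [mmahhTrans, ENNReal.toReal_mul, Fintype.sum_prod_type, mul_right_comm _ _ (g _),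
    ← mul_sum, sum_switchProb_toReal hp0 hp1 hq0 hq1, mul_one]
  exact sum_moveProb_toReal_mul f z.2 z.1 g

section Bits

variable {n : ℕ} {x : Point n} {v : Fin n}

lemma ones_optimum : ones (optimum n) = n := by
  simp [ones, optimum]

lemma eq_optimum_of_ones_eq (h : ones x = n) : x = optimum n := by
  have hfilter : univ.filter (fun i => x i = true) = univ :=
    eq_univ_of_card _ (by simpa [ones] using h)
  funext i
  have hi : i ∈ univ.filter fun i => x i = true := by
    rw [hfilter]
    exact mem_univ i
  simpa [optimum] using hi

lemma ones_flipBit_add_one (h : x v = true) : ones (flipBit x v) + 1 = ones x := by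
  have hfilter : univ.filter (fun i => flipBit x v i = true) =
      (univ.filter fun i => x i = true).erase v := by
    ext i
    by_cases hi : i = v <;> simp [flipBit, Function.update, hi, h]
  rw [ones, hfilter, card_erase_add_one (by simp [h]), ones]

lemma ones_flipBit_of_false (h : x v = false) : ones (flipBit x v) = ones x + 1 := by
  have hfilter : univ.filter (fun i => flipBit x v i = true) =
      insert v (univ.filter fun i => x i = true) := by
    ext i
    by_cases hi : i = v <;> simp [flipBit, Function.update, hi, h]
  rw [ones, hfilter, card_insert_of_notMem (by simp [h]), ones]

lemma sum_eq_ones_mul_add {g : Fin n → ℝ} {a b : ℝ} (ha : ∀ v, x v = true → g v = a)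
    (hb : ∀ v, x v = false → g v = b) :
    ∑ v, g v = ones x * a + (n - ones x) * b := by
  have hcard : ((univ.filter fun v => ¬x v = true).card : ℝ) = n - ones x := by
    rw [eq_sub_iff_add_eq, add_comm, ones]
    exact_mod_cast (card_filter_add_card_filter_not _).trans (card_fin n)
  rw [← sum_filter_add_sum_filter_not univ fun v => x v = true,
    sum_congr rfl fun v hv => ha v (mem_filter.mp hv).2,
    sum_congr rfl fun v hv => hb v (by simpa using (mem_filter.mp hv).2),
    sum_const, sum_const, nsmul_eq_mul, nsmul_eq_mul, hcard, ones]

end Bits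

lemma movedPoint_eq_flipBit {n : ℕ} {f : Point n → ℝ} {x : Point n} {v : Fin n}
    (h : f x < f (flipBit x v)) (op : Op) : movedPoint f op x v = flipBit x v := by
  cases op <;> simp [movedPoint, h]

lemma movedPoint_OI_eq_self {n : ℕ} {f : Point n → ℝ} {x : Point n} {v : Fin n}
    (h : f (flipBit x v) ≤ f x) : movedPoint f .OI x v = x := by
  simp [movedPoint, h.not_gt]

section GapRegion

variable {n m : ℕ} {x : Point n} {v : Fin n}

lemma Jump_of_gap (hx1 : n - m < ones x) (hx2 : ones x < n) : Jump n m x = n - ones x := by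
  rw [Jump, if_neg (by omega)]

lemma gapPotential_of_le (hx1 : n - m ≤ ones x) (hx2 : ones x < n) :
    gapPotential n m x = ones x - (n - m : ℝ) := by
  have hne : x ≠ optimum n := by
    rintro rfl
    simp [ones_optimum] at hx2
  have : (n : ℝ) ≤ ones x + m := by exact_mod_cast (by omega : n ≤ ones x + m)
  rw [gapPotential, if_neg hne, abs_of_nonpos (by linarith)]
  ring

lemma gapPotential_movedPoint_of_true (hx1 : n - m < ones x) (hx2 : ones x < n)
    (hv : x v = true) (op : Op) :
    gapPotential n m (movedPoint (Jump n m) op x v) = gapPotential n m x - 1 := by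
  have hflip := ones_flipBit_add_one hv
  have hup : Jump n m x < Jump n m (flipBit x v) := by
    have hk : (ones x : ℝ) = ones (flipBit x v) + 1 := by exact_mod_cast hflip.symm
    have hgap : (n : ℝ) < ones x + m := by exact_mod_cast (by omega : n < ones x + m)
    rw [Jump_of_gap hx1 hx2, Jump]
    split_ifs <;> linarith
  rw [movedPoint_eq_flipBit hup, gapPotential_of_le (by omega) (by omega),
    gapPotential_of_le hx1.le hx2, ← hflip]
  push_cast
  ring

lemma gapPotential_movedPoint_of_false_of_succ_eq (hx1 : n - m < ones x)
    (hx2 : ones x + 1 = n) (hv : x v = false) (op : Op) :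
    gapPotential n m (movedPoint (Jump n m) op x v) = 0 := by
  have hopt : flipBit x v = optimum n :=
    eq_optimum_of_ones_eq ((ones_flipBit_of_false hv).trans hx2)
  have hup : Jump n m x < Jump n m (flipBit x v) := by
    have hgap : (n : ℝ) < ones x + m := by exact_mod_cast (by omega : n < ones x + m)
    rw [Jump_of_gap hx1 (by omega), hopt, Jump, if_pos (Or.inr ones_optimum), ones_optimum]
    linarith
  rw [movedPoint_eq_flipBit hup, hopt, gapPotential, if_pos rfl]

lemma movedPoint_OI_of_false_of_succ_lt (hx1 : n - m < ones x) (hx2 : ones x + 1 < n)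
    (hv : x v = false) : movedPoint (Jump n m) .OI x v = x := by
  have hflip := ones_flipBit_of_false hv
  refine movedPoint_OI_eq_self ?_
  rw [Jump_of_gap hx1 (by omega), Jump_of_gap (by omega) (by omega), hflip]
  push_cast
  linarith

lemma gapPotential_movedPoint_AM_of_false_of_succ_lt (hx1 : n - m < ones x)
    (hx2 : ones x + 1 < n) (hv : x v = false) :
    gapPotential n m (movedPoint (Jump n m) .AM x v) = gapPotential n m x + 1 := by
  have hflip := ones_flipBit_of_false hv
  rw [movedPoint, gapPotential_of_le (by omega) (by omega), hflip,
    gapPotential_of_le hx1.le (by omega)]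
  push_cast
  ring

lemma two_mul_gapPotential_le_sum (hm : 2 * m ≤ n) (hx1 : n - m < ones x) (hx2 : ones x < n)
    (op : Op) :
    2 * gapPotential n m x ≤
      ∑ v, (gapPotential n m x - gapPotential n m (movedPoint (Jump n m) op x v)) := by
  have hdown : ∀ v, x v = true →
      gapPotential n m x - gapPotential n m (movedPoint (Jump n m) op x v) = 1 := fun v hv => by
    rw [gapPotential_movedPoint_of_true hx1 hx2 hv]
    ring
  have hd := gapPotential_of_le (m := m) hx1.le hx2
  have hk : (ones x : ℝ) + 1 ≤ n := by exact_mod_cast hx2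
  have hkm : (n : ℝ) < ones x + m := by exact_mod_cast (by omega : n < ones x + m)
  have hmR : 2 * (m : ℝ) ≤ n := by exact_mod_cast hm
  rcases (by omega : ones x + 1 = n ∨ ones x + 1 < n) with htop | hmid
  · have hnk : (n : ℝ) = ones x + 1 := by exact_mod_cast htop.symm
    rw [sum_eq_ones_mul_add hdown fun v hv => by
      rw [gapPotential_movedPoint_of_false_of_succ_eq hx1 htop hv, sub_zero]]
    rw [hnk] at hd ⊢
    nlinarith
  · cases op
    · rw [sum_eq_ones_mul_add hdown fun v hv => by
        rw [movedPoint_OI_of_false_of_succ_lt hx1 hmid hv, sub_self]]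
      linarith
    · rw [sum_eq_ones_mul_add hdown fun v hv => by
        rw [gapPotential_movedPoint_AM_of_false_of_succ_lt hx1 hmid hv]]
      linarith

end GapRegion

theorem drift_gap_region_general (n m : ℕ) (hm2 : 2 * m < n)
    (p q : ℝ) (hp0 : 0 < p) (hp1 : p < 1) (hq0 : 0 < q) (hq1 : q < 1)
    (Ω : Type) [MeasurableSpace Ω] (μ : Measure Ω) (X : ℕ → Ω → Point n × Op)
    (hprob : IsProbabilityMeasure μ) (hchain : IsMMAHH μ X (Jump n m) p q)
    (t : ℕ) (x : Point n) (hx1 : n - m < ones x) (hx2 : ones x < n) (s : Op)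
    (hpos : μ {ω | X t ω = (x, s)} ≠ 0) :
    2 * gapPotential n m x / (n : ℝ) ≤
      ∫ ω, (gapPotential n m (X t ω).1 - gapPotential n m (X (t + 1) ω).1)
        ∂(ProbabilityTheory.cond μ {ω | X t ω = (x, s)}) := by
  obtain ⟨hX, hK : IsMarkovChain μ X (mmahhTrans (Jump n m) p q)⟩ := hchain
  rw [hK.integral_cond_eq_sum hX hpos fun z z' => gapPotential n m z.1 - gapPotential n m z'.1,
    sum_mmahhTrans_toReal_mul _ hp0.le hp1.le hq0.le hq1.le (x, s)
      fun y => gapPotential n m x - gapPotential n m y]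
  gcongr
  exact two_mul_gapPotential_le_sum hm2.le hx1 hx2 s

/-- Drift in the gap region of `Jump_m` (Lemma 9 of the paper). -/
theorem drift_gap_region (n m : ℕ) (hn : 2 ≤ n) (hm1 : 1 < m) (hm2 : 2 * m < n)
    (p q : ℝ) (hp0 : 0 < p) (hp1 : p < 1) (hq0 : 0 < q) (hq1 : q < 1)
    (Ω : Type) [MeasurableSpace Ω] (μ : Measure Ω) (X : ℕ → Ω → Point n × Op)
    (hprob : IsProbabilityMeasure μ) (hchain : IsMMAHH μ X (Jump n m) p q)
    (t : ℕ) (x : Point n) (hx1 : n - m < ones x) (hx2 : ones x < n) (s : Op)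
    (hpos : μ {ω | X t ω = (x, s)} ≠ 0) :
    2 * gapPotential n m x / (n : ℝ) ≤
      ∫ ω, (gapPotential n m (X t ω).1 - gapPotential n m (X (t + 1) ω).1)
        ∂(ProbabilityTheory.cond μ {ω | X t ω = (x, s)}) :=
  drift_gap_region_general n m hm2 p q hp0 hp1 hq0 hq1 Ω μ X hprob hchain t x hx1 hx2 s hpos
end MMAHHStmt
end
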